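/- arXiv:1309.5751 — 2 statements merged into one kernel-verified Lean document; each statement's English description precedes it below -/
import Mathlib

section
/- Let K be a valued difference field of residue characteristic 0 satisfying Axiom 2, and suppose (G, a) is in σ-hensel configuration. Then there is b ∈ K with v(b − a) ≥ γ(G,a) and v(G(b)) > v(G(a)), and either G(b) = 0 or (G, b) is in σ-hensel configuration; moreover for any such b one has v(b − a) = γ(G,a) and γ(G,b) > γ(G,a). -/
noncomputable section
open scoped Classical

/-- A valued difference field: a valued field `(K, v)` with value group `Γ`
(additive, `v : K → WithTop Γ`, `v 0 = ⊤`), together with a distinguished field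
automorphism `σ` fixing the valuation ring setwise; `σΓ` is the induced
order-preserving automorphism of the value group. -/
structure VDF (K : Type*) [Field K] (Γ : Type*) [AddCommGroup Γ] [LinearOrder Γ] [IsOrderedAddMonoid Γ] where
  v : K → WithTop Γ
  σ : K ≃+* K
  σΓ : Γ ≃o Γ
  v_eq_top_iff : ∀ x : K, v x = ⊤ ↔ x = 0
  v_one : v 1 = 0
  v_mul : ∀ x y : K, v (x * y) = v x + v y
  v_neg : ∀ x : K, v (-x) = v x
  v_add : ∀ x y : K, min (v x) (v y) ≤ v (x + y)
  v_sigma : ∀ x : K, v (σ x) = WithTop.map σΓ (v x)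

namespace VDF

variable {K : Type*} [Field K] {Γ : Type*} [AddCommGroup Γ] [LinearOrder Γ] [IsOrderedAddMonoid Γ]

/-- A σ-polynomial of order `≤ n - 1` over `K` is encoded as an ordinary polynomial
`P` in the variables `X 0, …, X (n-1)`; its value at `a` is obtained by substituting
`σ^k(a)` for `X k`. -/
def sEval (V : VDF K Γ) {n : ℕ} (P : MvPolynomial (Fin n) K) (a : K) : K :=
  MvPolynomial.eval (fun k : Fin n => (⇑V.σ)^[(k : ℕ)] a) P

/-- `σ^i(γ) = Σ_k i_k σ^k(γ)` for a multi-index `i`. -/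
def sigmaIdx (V : VDF K Γ) {n : ℕ} (i : Fin n →₀ ℕ) (γ : Γ) : Γ :=
  ∑ k : Fin n, (i k) • (⇑V.σΓ)^[(k : ℕ)] γ

/-- `F_v(γ) = min_i (v(a_i) + σ^i(γ))`, the minimum over the monomials
(support) of the σ-polynomial `P` with coefficients `a_i`. -/
def Fv (V : VDF K Γ) {n : ℕ} (P : MvPolynomial (Fin n) K) (γ : Γ) : WithTop Γ :=
  P.support.inf fun i => V.v (MvPolynomial.coeff i P) + (V.sigmaIdx i γ : WithTop Γ)

/-- The norm `|j| = Σ_k j_k` of a multi-index. -/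
def degSum {n : ℕ} (j : Fin n →₀ ℕ) : ℕ := j.sum fun _ m => m

/-- The formal Taylor coefficient (Hasse derivative) `P_(j)` of a σ-polynomial `P`,
so that `P(y + x) = Σ_j P_(j)(y) σ(x)^j`. -/
def hasse {n : ℕ} (P : MvPolynomial (Fin n) K) (j : Fin n →₀ ℕ) :
    MvPolynomial (Fin n) K :=
  MvPolynomial.coeff j
    (MvPolynomial.bind₁
      (fun k => (MvPolynomial.C (MvPolynomial.X k) + MvPolynomial.X k :
        MvPolynomial (Fin n) (MvPolynomial (Fin n) K)))
      (MvPolynomial.map MvPolynomial.C P))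

/-- `(G, a)` is in σ-hensel configuration with associated `γ`. -/
def InSHC (V : VDF K Γ) {n : ℕ} (P : MvPolynomial (Fin (n + 1)) K) (a : K) (γ : Γ) :
    Prop :=
  (∃ i ∈ P.support, i ≠ 0) ∧
  (∃ i : Fin (n + 1) →₀ ℕ, degSum i = 1 ∧
      V.v (V.sEval P a) =
        V.v (V.sEval (hasse P i) a) + (V.sigmaIdx i γ : WithTop Γ)) ∧
  (∀ j : Fin (n + 1) →₀ ℕ, degSum j = 1 →
      V.v (V.sEval P a) ≤ V.v (V.sEval (hasse P j) a) + (V.sigmaIdx j γ : WithTop Γ)) ∧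
  (∀ j l : Fin (n + 1) →₀ ℕ, j ≠ 0 → l ≠ 0 → hasse P j ≠ 0 →
      V.v (V.sEval (hasse P j) a) + (V.sigmaIdx j γ : WithTop Γ) <
        V.v (V.sEval (hasse P (j + l)) a) + (V.sigmaIdx (j + l) γ : WithTop Γ))

/-- The residue field has characteristic zero. -/
def resChar0 (V : VDF K Γ) : Prop := ∀ m : ℕ, 0 < m → V.v (m : K) = 0

/-- Axiom 2: the residue difference field is linear difference closed, phrased at the
level of `K`: for `a_0, …, a_m` in the valuation ring, with some `a_i` a unit, the
equation `1 + Σ_i ā_i σ̄^i(x) = 0` has a solution in the residue field. -/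
def axiom2 (V : VDF K Γ) : Prop :=
  ∀ (m : ℕ) (a : Fin (m + 1) → K), (∀ i, 0 ≤ V.v (a i)) → (∃ i, V.v (a i) = 0) →
    ∃ u : K, 0 ≤ V.v u ∧ 0 < V.v (1 + ∑ i : Fin (m + 1), a i * (⇑V.σ)^[(i : ℕ)] u)

/-- σ-henselianity. -/
def sigmaHenselian (V : VDF K Γ) : Prop :=
  ∀ (n : ℕ) (P : MvPolynomial (Fin (n + 1)) K) (a : K) (γ : Γ),
    V.InSHC P a γ → ∃ b : K, V.v (b - a) = (γ : WithTop Γ) ∧ V.sEval P b = 0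

/-- `s` is a pseudo-Cauchy sequence. -/
def IsPC (V : VDF K Γ) {I : Type*} [LinearOrder I] (s : I → K) : Prop :=
  ∃ i0 : I, ∀ i j k : I, i0 ≤ i → i < j → j < k → V.v (s j - s i) < V.v (s k - s j)

/-- `x` is a pseudolimit of `s`, i.e. `v (x - s ρ)` is eventually strictly increasing. -/
def Plim (V : VDF K Γ) {I : Type*} [LinearOrder I] (s : I → K) (x : K) : Prop :=
  ∃ i0 : I, ∀ i j : I, i0 ≤ i → i < j → V.v (x - s i) < V.v (x - s j)

/-- Equivalence of pc-sequences: they have the same pseudolimits. -/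
def EquivPC (V : VDF K Γ) {I : Type*} [LinearOrder I] (s t : I → K) : Prop :=
  ∀ x : K, V.Plim s x ↔ V.Plim t x

/-- Axiom 1 for a difference subfield `E` of `K`: the induced automorphism of the
residue field of `E` is of infinite order, phrased at the level of `E`:
for each `d > 0` there is `y` in the valuation ring of `E` with
`σ̄^d(ȳ) ≠ ȳ`, i.e. `v (σ^d y - y) = 0`. -/
def axiom1On (V : VDF K Γ) (E : Subfield K) : Prop :=
  ∀ d : ℕ, 0 < d → ∃ y ∈ E, 0 ≤ V.v y ∧ V.v ((⇑V.σ)^[d] y - y) = 0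

end VDF

/-!
Expand `G(a + x) = G(a) + ∑_{|i|=1} G_(i)(a) σ(x)^i + ∑_{|j|≥2} G_(j)(a) σ(x)^j`. In σ-hensel
configuration every term with `|j| ≥ 2` has value `> v(G(a))` as soon as `v(x) ≥ γ`, and so does
the linear part once `v(x) > γ`; hence any `b` with `v(G(b)) > v(G(a))` has `v(b - a) = γ`.

To find such a `b`, pick `k` with `v(G(a)) = v(G_(e_k)(a)) + σ^k(γ)` and `ε` with
`σ^k(ε) = G(a) / G_(e_k)(a)`. For `x = ε u` the first two parts of the expansion become
`G(a) (1 + ∑_t α_t σ^t(u))` with all `v(α_t) ≥ 0` and `v(α_k) = 0`, and Axiom 2 yields `u` making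
`1 + ∑_t α_t σ^t(u)` infinitesimal.

In residue characteristic `0` the binomial factors relating `G_(j)(l)` to `G_(j+l)` are units, so
`v(G_(j)(b)) = v(G_(j)(a))` for `j ≠ 0`. Thus `(G, b)` is again in σ-hensel configuration, with
`γ(G, b)` fixed by `v(G(b))`; since `v(G(b)) > v(G(a))`, `γ(G, b) > γ`.
-/

theorem Nat.choose_mul_choose_add (m j l : ℕ) :
    (m + l).choose l * (m + l + j).choose j = (j + l).choose l * (m + (j + l)).choose (j + l) := by
  have h1 := Nat.choose_mul (n := m + l + j) (k := m + l) (s := l) (by omega)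
  have h2 := Nat.choose_mul (n := m + (j + l)) (k := j + l) (s := l) (by omega)
  rw [show m + l + j - l = m + j by omega, Nat.add_sub_cancel, Nat.choose_symm_add,
    Nat.choose_symm_add] at h1
  rw [show m + (j + l) - l = m + j by omega, Nat.add_sub_cancel] at h2
  rw [show m + (j + l) = m + l + j by omega] at h2 ⊢
  linarith

namespace VDF

open MvPolynomial

variable {K : Type*} [Field K] {Γ : Type*} [AddCommGroup Γ] [LinearOrder Γ] [IsOrderedAddMonoid Γ]

section Valuation

variable (V : VDF K Γ)

lemma v_zero : V.v 0 = ⊤ := (V.v_eq_top_iff 0).mpr rfl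

lemma v_add_eq_left_of_lt {x y : K} (h : V.v x < V.v y) : V.v (x + y) = V.v x := by
  refine le_antisymm ?_ ((le_min le_rfl h.le).trans (V.v_add x y))
  by_contra! hlt
  have := V.v_add (x + y) (-y)
  rw [add_neg_cancel_right, V.v_neg] at this
  exact (lt_min hlt h).not_ge this

lemma v_sub_ge (x y : K) : min (V.v x) (V.v y) ≤ V.v (x - y) := by
  simpa [sub_eq_add_neg, V.v_neg] using V.v_add x (-y)

lemma lt_v_sum {ι : Type*} (s : Finset ι) (f : ι → K) {c : WithTop Γ} (hc : c < ⊤)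
    (h : ∀ j ∈ s, c < V.v (f j)) : c < V.v (∑ j ∈ s, f j) := by
  classical
  induction s using Finset.induction with
  | empty => simpa [V.v_zero] using hc
  | insert i s hi ih =>
    rw [Finset.sum_insert hi]
    refine (lt_min (h i (s.mem_insert_self i)) (ih fun j hj => h j ?_)).trans_le (V.v_add _ _)
    exact Finset.mem_insert_of_mem hj

lemma v_prod {ι : Type*} (s : Finset ι) (f : ι → K) :
    V.v (∏ j ∈ s, f j) = ∑ j ∈ s, V.v (f j) := by
  classical
  induction s using Finset.induction with
  | empty => simpa using V.v_one
  | insert i s hi ih => rw [Finset.prod_insert hi, Finset.sum_insert hi, V.v_mul, ih]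

lemma v_pow (x : K) (m : ℕ) : V.v (x ^ m) = m • V.v x := by
  induction m with
  | zero => simpa using V.v_one
  | succ m ih => rw [pow_succ, V.v_mul, ih, succ_nsmul]

lemma v_div_add_v {x y : K} (hy : y ≠ 0) : V.v (x / y) + V.v y = V.v x := by
  rw [← V.v_mul, div_mul_cancel₀ x hy]

lemma v_iterate_sigma (k : ℕ) (x : K) :
    V.v ((⇑V.σ)^[k] x) = WithTop.map (⇑V.σΓ)^[k] (V.v x) := by
  induction k with
  | zero => cases h : V.v x <;> simp [h]
  | succ k ih =>
    rw [Function.iterate_succ_apply', V.v_sigma, ih, Function.iterate_succ']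
    cases V.v x <;> rfl

lemma v_iterate_sigma_eq_coe_iff {k : ℕ} {x : K} {γ : Γ} :
    V.v ((⇑V.σ)^[k] x) = ((⇑V.σΓ)^[k] γ : Γ) ↔ V.v x = γ := by
  rw [v_iterate_sigma]
  cases V.v x with
  | top => simp
  | coe β => simp [(V.σΓ.injective.iterate k).eq_iff]

lemma le_v_iterate_sigma {k : ℕ} {x : K} {γ : Γ} (hx : (γ : WithTop Γ) ≤ V.v x) :
    (((⇑V.σΓ)^[k] γ : Γ) : WithTop Γ) ≤ V.v ((⇑V.σ)^[k] x) := by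
  rw [v_iterate_sigma]
  cases h : V.v x with
  | top => exact le_top
  | coe β =>
    rw [h] at hx
    exact WithTop.coe_le_coe.mpr ((V.σΓ.monotone.iterate k) (WithTop.coe_le_coe.mp hx))

lemma lt_v_iterate_sigma {k : ℕ} {x : K} {γ : Γ} (hx : (γ : WithTop Γ) < V.v x) :
    (((⇑V.σΓ)^[k] γ : Γ) : WithTop Γ) < V.v ((⇑V.σ)^[k] x) := by
  rw [v_iterate_sigma]
  cases h : V.v x with
  | top => exact WithTop.coe_lt_top _
  | coe β =>
    rw [h] at hx
    exact WithTop.coe_lt_coe.mpr ((V.σΓ.strictMono.iterate k) (WithTop.coe_lt_coe.mp hx))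

lemma charZero_of_resChar0 (hchar : V.resChar0) : CharZero K :=
  charZero_of_inj_zero fun m hm => by
    by_contra hm0
    have := hchar m (Nat.pos_of_ne_zero hm0)
    rw [hm, V.v_zero] at this
    exact WithTop.top_ne_coe this

end Valuation

section SigmaPow

variable (V : VDF K Γ) {N : ℕ}

def sigmaPow (j : Fin N →₀ ℕ) (x : K) : K := ∏ k : Fin N, ((⇑V.σ)^[(k : ℕ)] x) ^ j k

@[simp]
lemma sigmaPow_zero (x : K) : V.sigmaPow (0 : Fin N →₀ ℕ) x = 1 := by
  simp [sigmaPow]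

lemma sigmaPow_single (t : Fin N) (x : K) :
    V.sigmaPow (Finsupp.single t 1) x = (⇑V.σ)^[(t : ℕ)] x := by
  rw [sigmaPow, Finset.prod_eq_single t (fun k _ hk => by simp [Finsupp.single_eq_of_ne hk])
    (by simp)]
  simp

lemma sigmaIdx_add (i l : Fin N →₀ ℕ) (γ : Γ) :
    V.sigmaIdx (i + l) γ = V.sigmaIdx i γ + V.sigmaIdx l γ := by
  simp only [sigmaIdx, Finsupp.add_apply, add_smul, Finset.sum_add_distrib]

lemma sigmaIdx_single (t : Fin N) (γ : Γ) :
    V.sigmaIdx (Finsupp.single t 1) γ = (⇑V.σΓ)^[(t : ℕ)] γ := by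
  rw [sigmaIdx, Finset.sum_eq_single t (fun k _ hk => by simp [Finsupp.single_eq_of_ne hk])
    (by simp)]
  simp

lemma sigmaIdx_mono (i : Fin N →₀ ℕ) : Monotone (V.sigmaIdx i) := fun _ _ hγ =>
  Finset.sum_le_sum fun k _ => nsmul_le_nsmul_right ((V.σΓ.monotone.iterate k) hγ) _

lemma le_v_sigmaPow {x : K} {γ : Γ} (hx : (γ : WithTop Γ) ≤ V.v x) (j : Fin N →₀ ℕ) :
    (V.sigmaIdx j γ : WithTop Γ) ≤ V.v (V.sigmaPow j x) := by
  rw [sigmaPow, v_prod, sigmaIdx, WithTop.coe_sum]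
  refine Finset.sum_le_sum fun k _ => ?_
  rw [v_pow, WithTop.coe_nsmul]
  exact nsmul_le_nsmul_right (V.le_v_iterate_sigma hx) _

end SigmaPow

section Hasse

variable {N : ℕ}

lemma degSum_single_one {N : ℕ} (k : Fin N) : degSum (Finsupp.single k 1) = 1 :=
  (Finsupp.sum_eq_one_iff _).mpr ⟨k, rfl⟩

/-- `P(X + Y)`, as a polynomial in `Y` over `K[X]`: its coefficients are the Hasse derivatives
of `P`. -/
def taylorExpansion (P : MvPolynomial (Fin N) K) :
    MvPolynomial (Fin N) (MvPolynomial (Fin N) K) :=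
  bind₁ (fun k => C (X k) + X k) (map C P)

lemma hasse_eq_coeff_taylorExpansion (P : MvPolynomial (Fin N) K) (j : Fin N →₀ ℕ) :
    hasse P j = coeff j (taylorExpansion P) := rfl

lemma C_X_add_X_pow (k : Fin N) (d : ℕ) :
    (C (X k) + X k : MvPolynomial (Fin N) (MvPolynomial (Fin N) K)) ^ d
      = ∑ t ∈ Finset.range (d + 1),
          monomial (Finsupp.single k t) (monomial (Finsupp.single k (d - t)) (d.choose t : K)) := by
  rw [add_comm, add_pow]
  refine Finset.sum_congr rfl fun t _ => ?_
  simp only [X_pow_eq_monomial, ← map_pow]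
  rw [mul_assoc, ← map_natCast (C : MvPolynomial (Fin N) K →+* _), ← map_mul, mul_comm,
    C_mul_monomial, mul_one, mul_comm, ← map_natCast (C : K →+* MvPolynomial (Fin N) K),
    C_mul_monomial, mul_one]

lemma coeff_prod_C_X_add_X_pow (d j : Fin N →₀ ℕ) :
    coeff j (∏ k, (C (X k) + X k : MvPolynomial (Fin N) (MvPolynomial (Fin N) K)) ^ d k)
      = monomial (d - j) ((∏ k, (d k).choose (j k) : ℕ) : K) := by
  simp only [C_X_add_X_pow, Finset.prod_univ_sum, ← monomial_sum_prod, coeff_sum, coeff_monomial]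
  have hsum : ∀ e : Fin N →₀ ℕ, ∑ i, Finsupp.single i (e i) = e := Finsupp.univ_sum_single
  rw [Finset.sum_eq_single (⇑j)]
  · rw [hsum j, if_pos rfl, Nat.cast_prod, ← hsum (d - j)]
    simp only [Finsupp.tsub_apply]
  · intro p _ hp
    refine if_neg fun h => hp ?_
    rw [← h]
    ext i
    simp [Finsupp.finsetSum_apply, Finsupp.single_apply]
  · intro hj
    obtain ⟨i, hi⟩ : ∃ i, d i < j i := by simpa [Fintype.mem_piFinset, Nat.lt_succ_iff] using hj
    rw [if_pos (hsum j),
      Finset.prod_eq_zero (Finset.mem_univ i) (by simp [Nat.choose_eq_zero_of_lt hi]), map_zero]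

lemma hasse_monomial (d j : Fin N →₀ ℕ) (c : K) :
    hasse (monomial d c) j = monomial (d - j) (((∏ k, (d k).choose (j k) : ℕ) : K) * c) := by
  rw [hasse_eq_coeff_taylorExpansion, taylorExpansion, map_monomial, bind₁_monomial,
    Finset.prod_subset d.support.subset_univ (fun k _ hk => by
      rw [Finsupp.notMem_support_iff.mp hk, pow_zero]),
    coeff_C_mul, coeff_prod_C_X_add_X_pow, C_mul_monomial, mul_comm]

lemma hasse_add (P Q : MvPolynomial (Fin N) K) (j : Fin N →₀ ℕ) :
    hasse (P + Q) j = hasse P j + hasse Q j := by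
  simp only [hasse_eq_coeff_taylorExpansion, taylorExpansion, map_add, coeff_add]

lemma coeff_hasse (P : MvPolynomial (Fin N) K) (j m : Fin N →₀ ℕ) :
    coeff m (hasse P j) = ((∏ k, (m k + j k).choose (j k) : ℕ) : K) * coeff (m + j) P := by
  induction P using MvPolynomial.induction_on' with
  | add P Q hP hQ => rw [hasse_add, coeff_add, hP, hQ, coeff_add, mul_add]
  | monomial d c =>
    rw [hasse_monomial, coeff_monomial, coeff_monomial]
    by_cases h : d = m + j
    · subst h
      simp
    · rw [if_neg h, mul_zero, ite_eq_right_iff]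
      intro hm
      obtain ⟨k, hk⟩ : ∃ k, d k < j k := by
        by_contra! hle
        exact h (by rw [← hm, tsub_add_cancel_of_le fun k => hle k])
      rw [Finset.prod_eq_zero (Finset.mem_univ k) (Nat.choose_eq_zero_of_lt hk), Nat.cast_zero,
        zero_mul]

@[simp]
lemma hasse_zero_right (P : MvPolynomial (Fin N) K) : hasse P 0 = P := by
  ext m
  simp [coeff_hasse]

@[simp]
lemma hasse_zero_left (j : Fin N →₀ ℕ) : hasse (0 : MvPolynomial (Fin N) K) j = 0 := by
  ext m
  simp [coeff_hasse]

lemma hasse_hasse (P : MvPolynomial (Fin N) K) (j l : Fin N →₀ ℕ) :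
    hasse (hasse P j) l = ((∏ k, (j k + l k).choose (l k) : ℕ) : K) • hasse P (j + l) := by
  ext m
  rw [coeff_hasse, coeff_hasse, coeff_smul, coeff_hasse, smul_eq_mul, ← mul_assoc, ← mul_assoc,
    ← Nat.cast_mul, ← Nat.cast_mul, ← Finset.prod_mul_distrib, ← Finset.prod_mul_distrib,
    add_assoc, add_comm l j]
  congr 3 with k
  simpa [add_assoc] using Nat.choose_mul_choose_add (m k) (j k) (l k)

lemma choose_prod_pos (j l : Fin N →₀ ℕ) : 0 < ∏ k, (j k + l k).choose (l k) :=
  Finset.prod_pos fun _ _ => Nat.choose_pos (Nat.le_add_left _ _)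

lemma hasse_ne_zero_of_mem_support {P : MvPolynomial (Fin N) K} {i : Fin N →₀ ℕ}
    (hi : i ∈ P.support) : hasse P i ≠ 0 := fun h =>
  mem_support_iff.mp hi (by simpa [coeff_hasse] using congr_arg (coeff 0) h)

variable [CharZero K]

lemma hasse_eq_zero_of_le {P : MvPolynomial (Fin N) K} {i j : Fin N →₀ ℕ} (hij : i ≤ j)
    (h : hasse P i = 0) : hasse P j = 0 := by
  have := hasse_hasse P i (j - i)
  rw [h, hasse_zero_left, add_tsub_cancel_of_le hij, eq_comm, smul_eq_zero] at this
  exact this.resolve_left (Nat.cast_ne_zero.mpr (choose_prod_pos i (j - i)).ne')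

lemma exists_hasse_single_ne_zero {P : MvPolynomial (Fin N) K} (h : ∃ i ∈ P.support, i ≠ 0) :
    ∃ k, hasse P (Finsupp.single k 1) ≠ 0 := by
  obtain ⟨i, hi, hi0⟩ := h
  obtain ⟨k, hk⟩ := Finsupp.ne_iff.mp hi0
  exact ⟨k, fun h0 => hasse_ne_zero_of_mem_support hi
    (hasse_eq_zero_of_le (Finsupp.single_le_iff.mpr (Nat.one_le_iff_ne_zero.mpr hk)) h0)⟩

end Hasse

section Taylor

variable (V : VDF K Γ) {N : ℕ}

@[simp]
lemma sEval_zero (a : K) : V.sEval (0 : MvPolynomial (Fin N) K) a = 0 := map_zero _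

lemma sEval_smul (c : K) (P : MvPolynomial (Fin N) K) (a : K) :
    V.sEval (c • P) a = c * V.sEval P a := by
  rw [sEval, smul_eq_C_mul, map_mul, eval_C, sEval]

lemma sEval_add_eq_sum (P : MvPolynomial (Fin N) K) (a x : K) :
    V.sEval P (a + x)
      = ∑ j ∈ (taylorExpansion P).support, V.sEval (hasse P j) a * V.sigmaPow j x := by
  have hsum : ∑ j ∈ (taylorExpansion P).support, V.sEval (hasse P j) a * V.sigmaPow j x
      = eval₂Hom (eval fun k : Fin N => (⇑V.σ)^[(k : ℕ)] a) (fun k : Fin N => (⇑V.σ)^[(k : ℕ)] x)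
          (taylorExpansion P) := by
    rw [coe_eval₂Hom, eval₂_eq']
    rfl
  have hC : (eval fun k : Fin N => (⇑V.σ)^[(k : ℕ)] a).comp C = RingHom.id K :=
    RingHom.ext fun r => eval_C r
  rw [hsum, taylorExpansion, eval₂Hom_bind₁, coe_eval₂Hom, eval₂_map, hC]
  simp only [map_add, eval₂Hom_C, eval₂Hom_X', eval_X, ← iterate_map_add]
  rfl

lemma sEval_add_sub_eq_sum (P : MvPolynomial (Fin N) K) (a x : K) :
    V.sEval P (a + x) - V.sEval P a
      = ∑ j ∈ (taylorExpansion P).support.erase 0, V.sEval (hasse P j) a * V.sigmaPow j x := by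
  rw [sEval_add_eq_sum]
  by_cases h0 : (0 : Fin N →₀ ℕ) ∈ (taylorExpansion P).support
  · rw [← Finset.add_sum_erase _ _ h0, hasse_zero_right, sigmaPow_zero, mul_one,
      add_sub_cancel_left]
  · have hP : P = 0 := by
      rw [← hasse_zero_right P, hasse_eq_coeff_taylorExpansion]
      exact notMem_support_iff.mp h0
    simp [hP, sEval]

lemma sEval_add_sub_sub_eq_sum (P : MvPolynomial (Fin N) K) (a x : K) :
    V.sEval P (a + x) - V.sEval P a
        - ∑ t, V.sEval (hasse P (Finsupp.single t 1)) a * (⇑V.σ)^[(t : ℕ)] x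
      = ∑ j ∈ (taylorExpansion P).support.filter (fun j => 1 < degSum j),
          V.sEval (hasse P j) a * V.sigmaPow j x := by
  set T := fun j => V.sEval (hasse P j) a * V.sigmaPow j x
  have hlin : ∑ t, V.sEval (hasse P (Finsupp.single t 1)) a * (⇑V.σ)^[(t : ℕ)] x
      = ∑ j ∈ ((taylorExpansion P).support.erase 0).filter (fun j => degSum j = 1), T j := by
    simp_rw [← V.sigmaPow_single]
    rw [← Finset.sum_image (g := fun t => Finsupp.single t 1) (f := T)
      fun _ _ _ _ h => Finsupp.single_left_injective one_ne_zero h]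
    refine (Finset.sum_subset (fun j hj => ?_) fun j hj hj' => ?_).symm
    · obtain ⟨t, rfl⟩ := (Finsupp.sum_eq_one_iff j).mp (Finset.mem_filter.mp hj).2
      exact Finset.mem_image_of_mem _ (Finset.mem_univ t)
    · obtain ⟨t, -, rfl⟩ := Finset.mem_image.mp hj
      have : Finsupp.single t 1 ∉ (taylorExpansion P).support := fun hS =>
        hj' (Finset.mem_filter.mpr ⟨Finset.mem_erase.mpr ⟨by simp, hS⟩, by simp [degSum]⟩)
      simp [T, hasse_eq_coeff_taylorExpansion, notMem_support_iff.mp this, sEval]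
  have hhigh : ((taylorExpansion P).support.erase 0).filter (fun j => ¬ degSum j = 1)
      = (taylorExpansion P).support.filter (fun j => 1 < degSum j) := by
    ext j
    have : degSum j = 0 ↔ j = 0 := Finsupp.degree_eq_zero_iff j
    simp only [Finset.mem_filter, Finset.mem_erase, ne_eq, ← this]
    constructor
    · rintro ⟨⟨h0, hS⟩, h1⟩
      exact ⟨hS, by omega⟩
    · rintro ⟨hS, h1⟩
      exact ⟨⟨by omega, hS⟩, by omega⟩
  rw [sEval_add_sub_eq_sum, hlin, sub_eq_iff_eq_add', ← hhigh]
  exact (Finset.sum_filter_add_sum_filter_not _ _ T).symm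

end Taylor

-- With `c k = v(G_(e_k)(b))`, `f k = σ^k` and `g = v(G(b))` this produces `γ(G, b)`.
lemma exists_eq_min_add {ι : Type*} [Fintype ι] (f : ι → Γ → Γ) (hf : ∀ k, Monotone (f k))
    (hsurj : ∀ k, Function.Surjective (f k)) (c : ι → WithTop Γ) (g : Γ) (hc : ∃ k, c k ≠ ⊤) :
    ∃ γ, (∃ k, (g : WithTop Γ) = c k + f k γ) ∧ ∀ k, (g : WithTop Γ) ≤ c k + f k γ := by
  choose δ hδ using fun k => hsurj k (g - (c k).untopD 0)
  have hbal : ∀ k, c k ≠ ⊤ → (g : WithTop Γ) = c k + f k (δ k) := fun k hk => by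
    obtain ⟨d, hd⟩ := WithTop.ne_top_iff_exists.mp hk
    rw [hδ, ← hd, WithTop.untopD_coe, ← WithTop.coe_add, add_sub_cancel]
  obtain ⟨k₀, hk₀⟩ := hc
  obtain ⟨k₁, hk₁, hmax⟩ :=
    (Finset.univ.filter fun k => c k ≠ ⊤).exists_max_image δ ⟨k₀, by simpa using hk₀⟩
  refine ⟨δ k₁, ⟨k₁, hbal k₁ (by simpa using hk₁)⟩, fun k => ?_⟩
  by_cases hk : c k = ⊤
  · simp [hk]
  · rw [hbal k hk]
    exact add_le_add le_rfl (WithTop.coe_le_coe.mpr (hf k (hmax k (by simpa using hk))))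

namespace InSHC

variable {V : VDF K Γ} {n : ℕ} {P : MvPolynomial (Fin (n + 1)) K} {a b x : K} {γ : Γ}

lemma sEval_hasse_ne_zero (h : V.InSHC P a γ) {j : Fin (n + 1) →₀ ℕ} (hj : j ≠ 0)
    (hne : hasse P j ≠ 0) : V.sEval (hasse P j) a ≠ 0 := fun hz => by
  have := h.2.2.2 j j hj hj hne
  rw [hz, V.v_zero, top_add] at this
  exact not_top_lt this

lemma v_hasse_lt (h : V.InSHC P a γ) {j l : Fin (n + 1) →₀ ℕ} (hj : j ≠ 0) (hl : l ≠ 0)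
    (hne : hasse P j ≠ 0) :
    V.v (V.sEval (hasse P j) a) < V.v (V.sEval (hasse P (j + l)) a) + V.sigmaIdx l γ := by
  have h4 := h.2.2.2 j l hj hl hne
  rw [V.sigmaIdx_add, WithTop.coe_add, ← add_assoc, add_right_comm] at h4
  exact (WithTop.add_lt_add_iff_right WithTop.coe_ne_top).mp h4

lemma v_sEval_hasse_eq (hchar : V.resChar0) (h : V.InSHC P a γ)
    (hb : (γ : WithTop Γ) ≤ V.v (b - a)) {j : Fin (n + 1) →₀ ℕ} (hj : j ≠ 0) :
    V.v (V.sEval (hasse P j) b) = V.v (V.sEval (hasse P j) a) := by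
  by_cases hZ : hasse P j = 0
  · simp [hZ]
  have hQ : V.v (V.sEval (hasse P j) a) ≠ ⊤ :=
    (V.v_eq_top_iff _).not.mpr (h.sEval_hasse_ne_zero hj hZ)
  have hsplit : V.sEval (hasse P j) b = V.sEval (hasse P j) a
      + (V.sEval (hasse P j) (a + (b - a)) - V.sEval (hasse P j) a) := by
    rw [add_sub_cancel, add_sub_cancel]
  rw [hsplit, V.v_add_eq_left_of_lt]
  rw [sEval_add_sub_eq_sum]
  refine V.lt_v_sum _ _ (lt_top_iff_ne_top.mpr hQ) fun l hl => ?_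
  rw [hasse_hasse, sEval_smul, V.v_mul, V.v_mul, hchar _ (choose_prod_pos j l), zero_add]
  exact (h.v_hasse_lt hj (Finset.ne_of_mem_erase hl) hZ).trans_le
    (add_le_add le_rfl (V.le_v_sigmaPow hb l))

section CharZero

variable [CharZero K]

lemma sEval_ne_zero (h : V.InSHC P a γ) : V.sEval P a ≠ 0 := fun hz => by
  obtain ⟨k, hk⟩ := exists_hasse_single_ne_zero h.1
  have h3 := h.2.2.1 _ (degSum_single_one k)
  rw [hz, V.v_zero, top_le_iff, WithTop.add_eq_top, V.v_eq_top_iff] at h3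
  exact h3.elim (h.sEval_hasse_ne_zero (by simp) hk) WithTop.coe_ne_top

lemma v_sEval_ne_top (h : V.InSHC P a γ) : V.v (V.sEval P a) ≠ ⊤ :=
  (V.v_eq_top_iff _).not.mpr h.sEval_ne_zero

lemma exists_v_eq_hasse_single_add (h : V.InSHC P a γ) : ∃ (k : Fin (n + 1)) (d : Γ),
    V.v (V.sEval (hasse P (Finsupp.single k 1)) a) = d ∧
      V.v (V.sEval P a) = ↑(d + (⇑V.σΓ)^[(k : ℕ)] γ) := by
  obtain ⟨i, hi, hbal⟩ := h.2.1
  obtain ⟨k, rfl⟩ := (Finsupp.sum_eq_one_iff i).mp hi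
  rw [V.sigmaIdx_single] at hbal
  cases hd : V.v (V.sEval (hasse P (Finsupp.single k 1)) a) with
  | top => exact (h.v_sEval_ne_top (by rw [hbal, hd, top_add])).elim
  | coe d => exact ⟨k, d, hd, by rw [hbal, hd, WithTop.coe_add]⟩

lemma lt_v_higher (h : V.InSHC P a γ) {j : Fin (n + 1) →₀ ℕ} (hj : 1 < degSum j)
    (hne : hasse P j ≠ 0) :
    V.v (V.sEval P a) < V.v (V.sEval (hasse P j) a) + V.sigmaIdx j γ := by
  obtain ⟨k, hk⟩ := Finsupp.ne_iff.mp (show j ≠ 0 by rintro rfl; simp [degSum] at hj)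
  have hle : Finsupp.single k 1 ≤ j :=
    Finsupp.single_le_iff.mpr (Nat.one_le_iff_ne_zero.mpr hk)
  have hl : j - Finsupp.single k 1 ≠ 0 := fun h0 => by
    rw [le_antisymm (tsub_eq_zero_iff_le.mp h0) hle, degSum_single_one] at hj
    exact hj.false
  have h4 := h.2.2.2 _ _ (by simp) hl fun h0 => hne (hasse_eq_zero_of_le hle h0)
  rw [add_tsub_cancel_of_le hle] at h4
  exact (h.2.2.1 _ (degSum_single_one k)).trans_lt h4

lemma lt_v_remainder (h : V.InSHC P a γ) (hx : (γ : WithTop Γ) ≤ V.v x) :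
    V.v (V.sEval P a) < V.v (V.sEval P (a + x) - V.sEval P a
      - ∑ t, V.sEval (hasse P (Finsupp.single t 1)) a * (⇑V.σ)^[(t : ℕ)] x) := by
  rw [sEval_add_sub_sub_eq_sum]
  refine V.lt_v_sum _ _ (lt_top_iff_ne_top.mpr h.v_sEval_ne_top) fun j hj => ?_
  by_cases hne : hasse P j = 0
  · simpa [hne, V.v_zero] using lt_top_iff_ne_top.mpr h.v_sEval_ne_top
  rw [V.v_mul]
  exact (h.lt_v_higher (Finset.mem_filter.mp hj).2 hne).trans_le
    (add_le_add le_rfl (V.le_v_sigmaPow hx j))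

lemma lt_v_linear (h : V.InSHC P a γ) (hx : (γ : WithTop Γ) < V.v x) :
    V.v (V.sEval P a)
      < V.v (∑ t, V.sEval (hasse P (Finsupp.single t 1)) a * (⇑V.σ)^[(t : ℕ)] x) := by
  refine V.lt_v_sum _ _ (lt_top_iff_ne_top.mpr h.v_sEval_ne_top) fun t _ => ?_
  rw [V.v_mul]
  by_cases hD : V.v (V.sEval (hasse P (Finsupp.single t 1)) a) = ⊤
  · simpa [hD] using lt_top_iff_ne_top.mpr h.v_sEval_ne_top
  calc V.v (V.sEval P a)
      ≤ V.v (V.sEval (hasse P (Finsupp.single t 1)) a) + ((⇑V.σΓ)^[(t : ℕ)] γ : Γ) := by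
        simpa [V.sigmaIdx_single] using h.2.2.1 _ (degSum_single_one t)
    _ < _ := WithTop.add_lt_add_left hD (V.lt_v_iterate_sigma hx)

lemma v_sub_eq (h : V.InSHC P a γ) (hb : (γ : WithTop Γ) ≤ V.v (b - a))
    (hlt : V.v (V.sEval P a) < V.v (V.sEval P b)) : V.v (b - a) = γ := by
  refine (hb.lt_or_eq.resolve_left fun hb' => ?_).symm
  have hdiff : V.v (V.sEval P a) < V.v (V.sEval P b - V.sEval P a) := by
    set L := ∑ t, V.sEval (hasse P (Finsupp.single t 1)) a * (⇑V.σ)^[(t : ℕ)] (b - a)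
    have hsplit : V.sEval P b - V.sEval P a
        = L + (V.sEval P (a + (b - a)) - V.sEval P a - L) := by
      rw [add_sub_cancel a b]
      ring
    rw [hsplit]
    exact (lt_min (h.lt_v_linear hb') (h.lt_v_remainder hb)).trans_le (V.v_add _ _)
  have := V.v_sub_ge (V.sEval P b) (V.sEval P b - V.sEval P a)
  rw [sub_sub_cancel] at this
  exact lt_irrefl _ ((lt_min hlt hdiff).trans_le this)

lemma exists_normalization (h : V.InSHC P a γ) :
    ∃ (ε : K) (α : Fin (n + 1) → K), V.v ε = γ ∧ (∀ t, 0 ≤ V.v (α t)) ∧ (∃ t, V.v (α t) = 0) ∧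
      ∀ u, V.sEval P a + ∑ t, V.sEval (hasse P (Finsupp.single t 1)) a * (⇑V.σ)^[(t : ℕ)] (ε * u)
        = V.sEval P a * (1 + ∑ t, α t * (⇑V.σ)^[(t : ℕ)] u) := by
  set D : Fin (n + 1) → K := fun t => V.sEval (hasse P (Finsupp.single t 1)) a
  have hG := h.sEval_ne_zero
  have hGtop := h.v_sEval_ne_top
  obtain ⟨k₀, d, hd, hbal⟩ := h.exists_v_eq_hasse_single_add
  have hD₀ : D k₀ ≠ 0 := (V.v_eq_top_iff _).not.mp (by simp [D, hd])
  obtain ⟨ε, hε⟩ := (V.σ.surjective.iterate k₀) (V.sEval P a / D k₀)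
  have hvε : V.v ε = γ := by
    rw [← V.v_iterate_sigma_eq_coe_iff (k := k₀), hε]
    refine WithTop.add_right_cancel (z := V.v (D k₀)) (by simp [D, hd]) ?_
    rw [V.v_div_add_v hD₀, hbal, hd, add_comm, WithTop.coe_add]
  set α : Fin (n + 1) → K := fun t => D t * (⇑V.σ)^[(t : ℕ)] ε / V.sEval P a
  have hα : ∀ t, V.v (α t) + V.v (V.sEval P a) = V.v (D t) + ((⇑V.σΓ)^[(t : ℕ)] γ : Γ) :=
    fun t => by rw [V.v_div_add_v hG, V.v_mul, V.v_iterate_sigma_eq_coe_iff.mpr hvε]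
  refine ⟨ε, α, hvε, fun t => ?_, ⟨k₀, ?_⟩, fun u => ?_⟩
  · have h3 := h.2.2.1 _ (degSum_single_one t)
    rw [V.sigmaIdx_single, ← hα t] at h3
    exact (WithTop.add_le_add_iff_right hGtop).mp (by rwa [zero_add])
  · exact WithTop.add_right_cancel hGtop (by rw [hα, zero_add, hd, hbal, WithTop.coe_add])
  · simp only [α, D, iterate_map_mul, mul_add, mul_one, Finset.mul_sum]
    congr 1
    refine Finset.sum_congr rfl fun t _ => ?_
    field_simp

end CharZero

lemma lt_of_v_lt (hchar : V.resChar0) (h : V.InSHC P a γ) (hb : (γ : WithTop Γ) ≤ V.v (b - a))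
    (hlt : V.v (V.sEval P a) < V.v (V.sEval P b)) {γ' : Γ}
    (h3 : ∀ j : Fin (n + 1) →₀ ℕ, degSum j = 1 →
      V.v (V.sEval P b) ≤ V.v (V.sEval (hasse P j) b) + V.sigmaIdx j γ') : γ < γ' := by
  have := V.charZero_of_resChar0 hchar
  obtain ⟨k, d, hd, hbal⟩ := h.exists_v_eq_hasse_single_add
  have hk := hlt.trans_le (h3 _ (degSum_single_one k))
  rw [h.v_sEval_hasse_eq hchar hb (by simp), hd, hbal, V.sigmaIdx_single, ← WithTop.coe_add,
    WithTop.coe_lt_coe, add_lt_add_iff_left] at hk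
  exact (V.σΓ.strictMono.iterate k).lt_iff_lt.mp hk

lemma exists_v_lt (hchar : V.resChar0) (hax2 : V.axiom2) (h : V.InSHC P a γ) :
    ∃ b, (γ : WithTop Γ) ≤ V.v (b - a) ∧ V.v (V.sEval P a) < V.v (V.sEval P b) := by
  have := V.charZero_of_resChar0 hchar
  obtain ⟨ε, α, hε, hα, hα₀, hlin⟩ := h.exists_normalization
  obtain ⟨u, hu, hsol⟩ := hax2 n α hα hα₀
  have hx : (γ : WithTop Γ) ≤ V.v (ε * u) := by
    rw [V.v_mul, hε]
    exact le_add_of_nonneg_right hu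
  refine ⟨a + ε * u, by rwa [add_sub_cancel_left], ?_⟩
  set L := ∑ t, V.sEval (hasse P (Finsupp.single t 1)) a * (⇑V.σ)^[(t : ℕ)] (ε * u)
  have hsplit : V.sEval P (a + ε * u)
      = (V.sEval P a + L) + (V.sEval P (a + ε * u) - V.sEval P a - L) := by
    ring
  rw [hsplit, hlin]
  refine (lt_min ?_ (h.lt_v_remainder hx)).trans_le (V.v_add _ _)
  rw [V.v_mul]
  simpa using WithTop.add_lt_add_left h.v_sEval_ne_top hsol

lemma exists_InSHC (hchar : V.resChar0) (h : V.InSHC P a γ) (hb : (γ : WithTop Γ) ≤ V.v (b - a))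
    (hlt : V.v (V.sEval P a) < V.v (V.sEval P b)) (hb0 : V.sEval P b ≠ 0) :
    ∃ γ', V.InSHC P b γ' := by
  have := V.charZero_of_resChar0 hchar
  obtain ⟨g, hg⟩ := WithTop.ne_top_iff_exists.mp ((V.v_eq_top_iff _).not.mpr hb0)
  obtain ⟨k₀, d, hd, -⟩ := h.exists_v_eq_hasse_single_add
  obtain ⟨γ', ⟨k, hk⟩, hmin⟩ := exists_eq_min_add (fun k : Fin (n + 1) => (⇑V.σΓ)^[(k : ℕ)])
    (fun k => V.σΓ.monotone.iterate k) (fun k => V.σΓ.surjective.iterate k)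
    (fun k => V.v (V.sEval (hasse P (Finsupp.single k 1)) b)) g
    ⟨k₀, by simp [h.v_sEval_hasse_eq hchar hb, hd]⟩
  have h3 : ∀ j : Fin (n + 1) →₀ ℕ, degSum j = 1 →
      V.v (V.sEval P b) ≤ V.v (V.sEval (hasse P j) b) + V.sigmaIdx j γ' := by
    intro j hj
    obtain ⟨t, rfl⟩ := (Finsupp.sum_eq_one_iff j).mp hj
    rw [V.sigmaIdx_single, ← hg]
    exact hmin t
  have hγ := h.lt_of_v_lt hchar hb hlt h3
  refine ⟨γ', h.1, ⟨_, degSum_single_one k, by rw [V.sigmaIdx_single, ← hg]; exact hk⟩, h3,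
    fun j l hj hl hne => ?_⟩
  rw [h.v_sEval_hasse_eq hchar hb hj,
    h.v_sEval_hasse_eq hchar hb fun h0 => hj (add_eq_zero.mp h0).1, V.sigmaIdx_add, WithTop.coe_add, ← add_assoc, add_right_comm]
  exact WithTop.add_lt_add_right WithTop.coe_ne_top ((h.v_hasse_lt hj hl hne).trans_le
    (add_le_add le_rfl (WithTop.coe_le_coe.mpr (V.sigmaIdx_mono l hγ.le))))

end InSHC

end VDF

open VDF in
/-- residue characteristic `0`, Axiom 2, and `(G, a)` in σ-hensel
configuration. Then there is `b` with `v (b - a) ≥ γ(G,a)`, `v (G(b)) > v (G(a))`,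
and either `G(b) = 0` or `(G, b)` is in σ-hensel configuration; moreover any such `b`
satisfies `v (b - a) = γ(G,a)` and `γ(G,b) > γ(G,a)`. -/
theorem stmt10 {K : Type*} [Field K] {Γ : Type*} [AddCommGroup Γ] [LinearOrder Γ] [IsOrderedAddMonoid Γ]
    (V : VDF K Γ) (hchar : V.resChar0) (hax2 : V.axiom2)
    (n : ℕ) (P : MvPolynomial (Fin (n + 1)) K) (a : K) (γ : Γ) (h : V.InSHC P a γ) :
    (∃ b : K, (γ : WithTop Γ) ≤ V.v (b - a) ∧
        V.v (V.sEval P a) < V.v (V.sEval P b) ∧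
        (V.sEval P b = 0 ∨ ∃ γ' : Γ, V.InSHC P b γ')) ∧
    (∀ b : K, (γ : WithTop Γ) ≤ V.v (b - a) →
        V.v (V.sEval P a) < V.v (V.sEval P b) →
        (V.sEval P b = 0 ∨ ∃ γ' : Γ, V.InSHC P b γ') →
        V.v (b - a) = (γ : WithTop Γ) ∧ ∀ γ' : Γ, V.InSHC P b γ' → γ < γ') := by
  have := V.charZero_of_resChar0 hchar
  refine ⟨?_, fun b hb hlt _ =>
    ⟨h.v_sub_eq hb hlt, fun γ' h' => h.lt_of_v_lt hchar hb hlt h'.2.2.1⟩⟩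
  obtain ⟨b, hb, hlt⟩ := h.exists_v_lt hchar hax2
  refine ⟨b, hb, hlt, ?_⟩
  by_cases hb0 : V.sEval P b = 0
  · exact Or.inl hb0
  · exact Or.inr (h.exists_InSHC hchar hb hlt hb0)
end
end

section
/- (Kapranov's theorem, one variable) Let F be a nonzero polynomial in one variable over an algebraically closed nontrivially valued field (K, Γ, v), and let γ ∈ Γ be a tropical zero of F. Then there exists a ∈ K with v(a) = γ and F(a) = 0. -/
noncomputable section
open scoped Classical

/-- A valued field `(K, v)` with value group `Γ` (additive, `v 0 = ⊤`). -/
structure VF (K : Type*) [Field K] (Γ : Type*) [AddCommGroup Γ] [LinearOrder Γ] [IsOrderedAddMonoid Γ] where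
  v : K → WithTop Γ
  v_eq_top_iff : ∀ x : K, v x = ⊤ ↔ x = 0
  v_one : v 1 = 0
  v_mul : ∀ x y : K, v (x * y) = v x + v y
  v_neg : ∀ x : K, v (-x) = v x
  v_add : ∀ x y : K, min (v x) (v y) ≤ v (x + y)

namespace VF

variable {K : Type*} [Field K] {Γ : Type*} [AddCommGroup Γ] [LinearOrder Γ] [IsOrderedAddMonoid Γ]

/-- The tropicalization `F_v(γ) = min_i (v (a_i) + i γ)` of a one-variable polynomial
`F = Σ_i a_i x^i` (minimum over indices with `a_i ≠ 0`). -/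
def Fv1 (V : VF K Γ) (F : Polynomial K) (γ : Γ) : WithTop Γ :=
  F.support.inf fun i => V.v (F.coeff i) + ((i • γ : Γ) : WithTop Γ)

/-- `γ` is a tropical zero of `F`: the minimum `F_v(γ)` is attained at two distinct
indices. -/
def TropZero (V : VF K Γ) (F : Polynomial K) (γ : Γ) : Prop :=
  ∃ i ∈ F.support, ∃ j ∈ F.support, i ≠ j ∧
    V.v (F.coeff i) + ((i • γ : Γ) : WithTop Γ) = V.Fv1 F γ ∧
    V.v (F.coeff j) + ((j • γ : Γ) : WithTop Γ) = V.Fv1 F γ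

/-- The valuation is nontrivial. -/
def Nontriv (V : VF K Γ) : Prop := ∃ x : K, x ≠ 0 ∧ V.v x ≠ 0

end VF

/-
If no root of `F = c ∏ (X - r)` has valuation `γ`, then each factor `X - r` has a unique
tropically minimal term at `γ`: the constant term when `v r < γ`, the leading term when
`v r > γ`. Uniqueness of the minimal term is preserved under products, because the
coefficient of `X ^ (d + e)` in `P Q` is dominated by the single product `P_d Q_e`. So the
minimum of `F_v(γ)` is attained only once, and `γ` is not a tropical zero.
-/

namespace VF

open Polynomial Finset

variable {K : Type*} [Field K] {Γ : Type*} [AddCommGroup Γ] [LinearOrder Γ] [IsOrderedAddMonoid Γ]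
  (V : VF K Γ)

@[simp]
lemma v_zero : V.v 0 = ⊤ := (V.v_eq_top_iff 0).2 rfl

def toAddValuation : AddValuation K (WithTop Γ) :=
  AddValuation.of V.v V.v_zero V.v_one V.v_add V.v_mul

@[simp]
lemma toAddValuation_apply (x : K) : V.toAddValuation x = V.v x := rfl

lemma lt_v_sum_add_coe {ι : Type*} {s : Finset ι} {f : ι → K} {m : WithTop Γ} (g : Γ)
    (hm : m ≠ ⊤) (h : ∀ i ∈ s, m < V.v (f i) + g) : m < V.v (∑ i ∈ s, f i) + g := by
  have shift : ∀ x : WithTop Γ, m < x + g ↔ m + ↑(-g) < x := fun x => by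
    have hm' : m = m + ↑(-g) + ↑g := by
      rw [add_assoc, ← WithTop.coe_add, neg_add_cancel, WithTop.coe_zero, add_zero]
    conv_lhs => rw [hm']
    exact WithTop.add_lt_add_iff_right WithTop.coe_ne_top
  rw [shift]
  exact V.toAddValuation.map_lt_sum (WithTop.add_ne_top.2 ⟨hm, WithTop.coe_ne_top⟩)
    fun i hi => (shift _).1 (h i hi)

lemma v_sum_eq_of_lt {ι : Type*} {s : Finset ι} {f : ι → K} {j : ι} (hj : j ∈ s)
    (hfj : V.v (f j) ≠ ⊤) (h : ∀ i ∈ s, i ≠ j → V.v (f j) < V.v (f i)) :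
    V.v (∑ i ∈ s, f i) = V.v (f j) := by
  rw [← Finset.add_sum_erase s f hj]
  exact V.toAddValuation.map_add_eq_of_lt_left <| V.toAddValuation.map_lt_sum hfj
    fun i hi => h i (Finset.mem_of_mem_erase hi) (Finset.ne_of_mem_erase hi)

def tropTerm (P : K[X]) (γ : Γ) (k : ℕ) : WithTop Γ :=
  V.v (P.coeff k) + ((k • γ : Γ) : WithTop Γ)

def HasUniqueTropMinAt (P : K[X]) (γ : Γ) (d : ℕ) : Prop :=
  ∀ k ≠ d, V.tropTerm P γ d < V.tropTerm P γ k

variable {V} {P Q : K[X]} {γ : Γ} {d e : ℕ}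

lemma HasUniqueTropMinAt.le (hP : V.HasUniqueTropMinAt P γ d) (k : ℕ) :
    V.tropTerm P γ d ≤ V.tropTerm P γ k := by
  rcases eq_or_ne k d with rfl | hk
  · exact le_rfl
  · exact (hP k hk).le

lemma HasUniqueTropMinAt.tropTerm_ne_top (hP : V.HasUniqueTropMinAt P γ d) :
    V.tropTerm P γ d ≠ ⊤ :=
  ne_top_of_lt (hP (d + 1) (by omega))

lemma HasUniqueTropMinAt.not_tropZero (hP : V.HasUniqueTropMinAt P γ d) :
    ¬ V.TropZero P γ := by
  rintro ⟨i, -, j, -, hij, hi, hj⟩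
  have hd : d ∈ P.support := by
    rw [mem_support_iff, Ne, ← V.v_eq_top_iff]
    exact fun h => hP.tropTerm_ne_top (by rw [tropTerm, h, top_add])
  have hmin : V.Fv1 P γ ≤ V.tropTerm P γ d := Finset.inf_le hd
  obtain ⟨k, hkd, hk⟩ : ∃ k ≠ d, V.tropTerm P γ k = V.Fv1 P γ := by
    rcases eq_or_ne i d with rfl | hid
    · exact ⟨j, hij.symm, hj⟩
    · exact ⟨i, hid, hi⟩
  exact (hP k hkd).not_ge (hk ▸ hmin)

lemma hasUniqueTropMinAt_C {c : K} (hc : c ≠ 0) : V.HasUniqueTropMinAt (C c) γ 0 := by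
  intro k hk
  have hvc : V.v c ≠ ⊤ := (V.v_eq_top_iff c).not.2 hc
  simp [tropTerm, coeff_C, hk, lt_top_iff_ne_top, hvc]

lemma hasUniqueTropMinAt_X_sub_C_of_lt {r : K} (hr : V.v r < γ) :
    V.HasUniqueTropMinAt (X - C r) γ 0 := by
  intro k hk
  rcases k with _ | _ | k
  · exact absurd rfl hk
  · simpa [tropTerm, V.v_neg, V.v_one] using hr
  · simpa [tropTerm, V.v_neg, coeff_X, coeff_C] using hr.trans_le le_top

lemma hasUniqueTropMinAt_X_sub_C_of_gt {r : K} (hr : γ < V.v r) :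
    V.HasUniqueTropMinAt (X - C r) γ 1 := by
  intro k hk
  rcases k with _ | _ | k
  · simpa [tropTerm, V.v_neg, V.v_one] using hr
  · exact absurd rfl hk
  · simp [tropTerm, V.v_one, coeff_X]

lemma HasUniqueTropMinAt.mul (hP : V.HasUniqueTropMinAt P γ d)
    (hQ : V.HasUniqueTropMinAt Q γ e) : V.HasUniqueTropMinAt (P * Q) γ (d + e) := by
  set m := V.tropTerm P γ d + V.tropTerm Q γ e with hm_def
  have hm : m ≠ ⊤ := WithTop.add_ne_top.2 ⟨hP.tropTerm_ne_top, hQ.tropTerm_ne_top⟩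
  have hpair : ∀ a b, (a, b) ≠ (d, e) → m < V.tropTerm P γ a + V.tropTerm Q γ b := by
    intro a b hab
    rcases eq_or_ne a d with rfl | had
    · have hbe : b ≠ e := fun h => hab (by rw [h])
      exact WithTop.add_lt_add_of_le_of_lt hP.tropTerm_ne_top le_rfl (hQ b hbe)
    · exact WithTop.add_lt_add_of_lt_of_le hQ.tropTerm_ne_top (hP a had) (hQ.le b)
  have hterm : ∀ a b, V.tropTerm P γ a + V.tropTerm Q γ b =
      V.v (P.coeff a * Q.coeff b) + (((a + b) • γ : Γ) : WithTop Γ) := by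
    intro a b
    rw [tropTerm, tropTerm, V.v_mul, add_nsmul, WithTop.coe_add]
    abel
  have hcoeff : ∀ k, V.tropTerm (P * Q) γ k =
      V.v (∑ x ∈ antidiagonal k, P.coeff x.1 * Q.coeff x.2) + ((k • γ : Γ) : WithTop Γ) :=
    fun k => by rw [tropTerm, coeff_mul]
  have hmin : V.tropTerm (P * Q) γ (d + e) = m := by
    have hde : (d, e) ∈ antidiagonal (d + e) := HasAntidiagonal.mem_antidiagonal.2 rfl
    rw [hcoeff, V.v_sum_eq_of_lt hde]
    · exact (hterm d e).symm
    · exact fun h => hm (by rw [hm_def, hterm, h, top_add])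
    · intro x hx hxde
      rw [HasAntidiagonal.mem_antidiagonal] at hx
      refine (WithTop.add_lt_add_iff_right (WithTop.coe_ne_top (a := (d + e) • γ))).1 ?_
      rw [← hterm, ← hx, ← hterm]
      exact hpair _ _ hxde
  intro k hk
  rw [hmin, hcoeff]
  refine V.lt_v_sum_add_coe _ hm fun x hx => ?_
  rw [HasAntidiagonal.mem_antidiagonal] at hx
  rw [← hx, ← hterm]
  refine hpair _ _ fun h => hk ?_
  obtain ⟨h1, h2⟩ := Prod.mk.inj h
  rw [← hx, h1, h2]

lemma exists_hasUniqueTropMinAt_C_mul_prod {c : K} (hc : c ≠ 0) {s : Multiset K}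
    (hs : ∀ r ∈ s, V.v r ≠ γ) :
    ∃ d, V.HasUniqueTropMinAt (C c * (s.map fun r => X - C r).prod) γ d := by
  obtain ⟨d, hd⟩ : ∃ d, V.HasUniqueTropMinAt (s.map fun r => X - C r).prod γ d := by
    refine Multiset.prod_induction (fun P => ∃ d, V.HasUniqueTropMinAt P γ d) _
      (fun P Q ⟨d, hP⟩ ⟨e, hQ⟩ => ⟨d + e, hP.mul hQ⟩)
      ⟨0, by simpa using hasUniqueTropMinAt_C (V := V) (γ := γ) one_ne_zero⟩ ?_
    simp only [Multiset.mem_map, forall_exists_index, and_imp]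
    rintro _ r hr rfl
    rcases (hs r hr).lt_or_gt with hlt | hgt
    · exact ⟨0, hasUniqueTropMinAt_X_sub_C_of_lt hlt⟩
    · exact ⟨1, hasUniqueTropMinAt_X_sub_C_of_gt hgt⟩
  exact ⟨0 + d, (hasUniqueTropMinAt_C hc).mul hd⟩

end VF

theorem stmt14_general {K : Type*} [Field K] [IsAlgClosed K]
    {Γ : Type*} [AddCommGroup Γ] [LinearOrder Γ] [IsOrderedAddMonoid Γ]
    (V : VF K Γ)
    (F : Polynomial K) (hF : F ≠ 0) (γ : Γ) (htz : V.TropZero F γ) :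
    ∃ a : K, V.v a = (γ : WithTop Γ) ∧ Polynomial.eval a F = 0 := by
  by_contra! hno
  have hroots : ∀ r ∈ F.roots, V.v r ≠ γ := fun r hr hv =>
    hno r hv ((Polynomial.mem_roots hF).1 hr)
  obtain ⟨d, hd⟩ := VF.exists_hasUniqueTropMinAt_C_mul_prod
    (Polynomial.leadingCoeff_ne_zero.2 hF) hroots
  rw [← (IsAlgClosed.splits F).eq_prod_roots] at hd
  exact hd.not_tropZero htz

/-- Kapranov's theorem, one variable: if `F` is a nonzero one-variable
polynomial over an algebraically closed nontrivially valued field and `γ` is a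
tropical zero of `F`, then `F` has a root of valuation `γ`. -/
theorem stmt14 {K : Type*} [Field K] [IsAlgClosed K]
    {Γ : Type*} [AddCommGroup Γ] [LinearOrder Γ] [IsOrderedAddMonoid Γ]
    (V : VF K Γ) (hnt : V.Nontriv)
    (F : Polynomial K) (hF : F ≠ 0) (γ : Γ) (htz : V.TropZero F γ) :
    ∃ a : K, V.v a = (γ : WithTop Γ) ∧ Polynomial.eval a F = 0 :=
  stmt14_general V F hF γ htz
end
end
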